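/- arXiv:1702.04077 — 4 statements merged into one kernel-verified Lean document; each statement's English description precedes it below -/
import Mathlib

section
/- Let M be an ℓ×ℓ real symmetric positive definite matrix partitioned into blocks M_vv (n×n), M_vh, M_hv = M_vhᵀ, M_hh, and let Q_vv be an n×n real symmetric positive definite matrix. Set A := (M_vv)⁻¹ M_vh, M_{h|v} := M_hh − M_hv (M_vv)⁻¹ M_vh, and let Q be the ℓ×ℓ block matrix with blocks Q_vv, Q_vv·A, Aᵀ·Q_vv, and M_{h|v} + Aᵀ Q_vv A. Then Q is symmetric positive definite. -/
/-!
The Schur complement of the positive definite block `Qvv` in `Q` is exactly `Mhv`, and `Mhv` is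
itself the Schur complement of the positive definite block `M.toBlocks₁₁` in `M`. Both steps are
instances of the criterion: a Hermitian block matrix with positive definite leading block is
positive definite iff its Schur complement is.
-/

open Matrix

namespace Matrix

theorem posDef_fromBlocks₁₁_iff {m n R : Type*} [Fintype m] [Fintype n] [DecidableEq m]
    [CommRing R] [PartialOrder R] [StarRing R] [StarOrderedRing R]
    {A : Matrix m m R} (B : Matrix m n R) (D : Matrix n n R) (hA : A.PosDef) [Invertible A] :
    (fromBlocks A B Bᴴ D).PosDef ↔ (D - Bᴴ * A⁻¹ * B).PosDef := by
  rw [posDef_iff_dotProduct_mulVec, posDef_iff_dotProduct_mulVec,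
    IsHermitian.fromBlocks₁₁ _ _ hA.1]
  refine and_congr_right fun _ => ⟨fun h x hx => ?_, fun h v hv => ?_⟩
  · have hv : -((A⁻¹ * B) *ᵥ x) ⊕ᵥ x ≠ 0 := fun h0 =>
      hx (by simpa using congrArg (· ∘ Sum.inr) h0)
    have := h hv
    rwa [dotProduct_mulVec, schur_complement_eq₁₁ B D _ _ hA.1, neg_add_cancel, dotProduct_zero,
      zero_add, ← dotProduct_mulVec] at this
  · rw [dotProduct_mulVec, ← Sum.elim_comp_inl_inr v, schur_complement_eq₁₁ B D _ _ hA.1,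
      ← dotProduct_mulVec, ← dotProduct_mulVec]
    by_cases hx : v ∘ Sum.inr = 0
    · have hu : v ∘ Sum.inl ≠ 0 := fun hu =>
        hv (by ext (i | i); exacts [congrFun hu i, congrFun hx i])
      simpa [hx] using hA.dotProduct_mulVec_pos hu
    · exact add_pos_of_nonneg_of_pos (hA.posSemidef.dotProduct_mulVec_nonneg _) (h hx)

theorem PosDef.schur_complement_toBlocks₁₁ {m n K : Type*}
    [Fintype m] [Fintype n] [DecidableEq m]
    [Field K] [PartialOrder K] [StarRing K] [StarOrderedRing K]
    {M : Matrix (m ⊕ n) (m ⊕ n) K} (hM : M.PosDef) :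
    (M.toBlocks₂₂ - M.toBlocks₂₁ * M.toBlocks₁₁⁻¹ * M.toBlocks₁₂).PosDef := by
  have h₁₁ : M.toBlocks₁₁.PosDef := hM.submatrix Sum.inl_injective
  have := h₁₁.isUnit.invertible
  have h₂₁ : M.toBlocks₂₁ = M.toBlocks₁₂ᴴ :=
    (isHermitian_fromBlocks_iff.mp ((fromBlocks_toBlocks M).symm ▸ hM.1)).2.1.symm
  rw [h₂₁, ← posDef_fromBlocks₁₁_iff _ _ h₁₁, ← h₂₁, fromBlocks_toBlocks]
  exact hM

end Matrix

theorem stmt5_general {n m : ℕ}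
    (M : Matrix (Fin n ⊕ Fin m) (Fin n ⊕ Fin m) ℝ) (hM : M.PosDef)
    (Qvv : Matrix (Fin n) (Fin n) ℝ) (hQvv : Qvv.PosDef)
    (A : Matrix (Fin n) (Fin m) ℝ)
    (Mhv : Matrix (Fin m) (Fin m) ℝ)
    (hMhv : Mhv = M.toBlocks₂₂ - M.toBlocks₂₁ * (M.toBlocks₁₁)⁻¹ * M.toBlocks₁₂) :
    (Matrix.fromBlocks Qvv (Qvv * A) (Aᵀ * Qvv) (Mhv + Aᵀ * Qvv * A)).PosDef := by
  have := hQvv.isUnit.invertible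
  have hB : (Qvv * A)ᴴ = Aᵀ * Qvv := by
    rw [conjTranspose_mul, hQvv.1.eq, conjTranspose_eq_transpose_of_trivial]
  have hSchur : Mhv + Aᵀ * Qvv * A - Aᵀ * Qvv * Qvv⁻¹ * (Qvv * A) = Mhv := by
    rw [Matrix.mul_assoc, Matrix.mul_assoc, inv_mul_cancel_left_of_invertible,
      ← Matrix.mul_assoc, add_sub_cancel_right]
  have key := posDef_fromBlocks₁₁_iff (Qvv * A) (Mhv + Aᵀ * Qvv * A) hQvv
  rw [hB, hSchur] at key
  exact key.mpr (hMhv ▸ hM.schur_complement_toBlocks₁₁)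

theorem stmt5 {n m : ℕ}
    (M : Matrix (Fin n ⊕ Fin m) (Fin n ⊕ Fin m) ℝ) (hM : M.PosDef)
    (Qvv : Matrix (Fin n) (Fin n) ℝ) (hQvv : Qvv.PosDef)
    (A : Matrix (Fin n) (Fin m) ℝ) (hA : A = (M.toBlocks₁₁)⁻¹ * M.toBlocks₁₂)
    (Mhv : Matrix (Fin m) (Fin m) ℝ)
    (hMhv : Mhv = M.toBlocks₂₂ - M.toBlocks₂₁ * (M.toBlocks₁₁)⁻¹ * M.toBlocks₁₂) :
    (Matrix.fromBlocks Qvv (Qvv * A) (Aᵀ * Qvv) (Mhv + Aᵀ * Qvv * A)).PosDef :=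
  stmt5_general M hM Qvv hQvv A Mhv hMhv
end

section
/- Let M be an ℓ×ℓ real symmetric positive definite matrix partitioned into blocks M_vv (n×n), M_vh, M_hv = M_vhᵀ, M_hh, and let Q_vv be a fixed n×n real symmetric positive definite matrix. Among all ℓ×ℓ symmetric positive definite matrices Q whose upper-left n×n block equals Q_vv, the function Q ↦ Tr(M⁻¹Q) − log det Q is minimized by the completion with Q_vh = Q_vv (M_vv)⁻¹ M_vh and Q_hh = M_{h|v} + M_hv (M_vv)⁻¹ Q_vv (M_vv)⁻¹ M_vh, where M_{h|v} := M_hh − M_hv (M_vv)⁻¹ M_vh; that is, for every such Q, Tr(M⁻¹Q) − log det Q ≥ Tr(M⁻¹Q*) − log det Q*, where Q* denotes the stated completion. -/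
open Matrix Real

/-!
Write `A = M_vv`, `Q* = blockCompletion M Q_vv` and `E = fromBlocks (A⁻¹ - Q_vv⁻¹) 0 0 0`.
A block computation gives `M E Q* = Q* - M`, i.e. `M⁻¹ = Q*⁻¹ + E`. Since `E` only sees the
`vv` block, on which all completions agree, `Tr(M⁻¹Q) - Tr(M⁻¹Q*) = Tr(Q*⁻¹Q) - ℓ`, and the claim
becomes `ℓ + log det Q - log det Q* ≤ Tr(Q*⁻¹Q)`. Writing `Q*⁻¹ = Rᴴ R`, this is `log λ ≤ λ - 1`
summed over the eigenvalues of `R Q Rᴴ`. Positivity of `Q*` holds because its Schur complement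
is `M_{h|v}`, the Schur complement of `M`.
-/

namespace Matrix

section LogDet

variable {a : Type*} [Fintype a] [DecidableEq a]

theorem PosDef.card_add_log_det_le_trace {T : Matrix a a ℝ} (hT : T.PosDef) :
    Fintype.card a + log T.det ≤ T.trace := by
  have hev := hT.eigenvalues_pos
  rw [hT.isHermitian.trace_eq_sum_eigenvalues, hT.isHermitian.det_eq_prod_eigenvalues]
  simp only [RCLike.ofReal_real_eq_id, id]
  rw [log_prod fun i _ => (hev i).ne', Fintype.card_eq_sum_ones, Nat.cast_sum, Nat.cast_one,
    ← Finset.sum_add_distrib]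
  gcongr with i
  linarith [log_le_sub_one_of_pos (hev i)]

open scoped MatrixOrder in
theorem PosDef.card_add_log_det_sub_log_det_le_trace_inv_mul {P Q : Matrix a a ℝ}
    (hP : P.PosDef) (hQ : Q.PosDef) :
    Fintype.card a + log Q.det - log P.det ≤ (P⁻¹ * Q).trace := by
  obtain ⟨R, hR⟩ := CStarAlgebra.nonneg_iff_eq_star_mul_self.mp hP.inv.posSemidef.nonneg
  have hdet : star R.det * R.det = P.det⁻¹ := by
    rw [← det_conjTranspose, ← star_eq_conjTranspose, ← det_mul, ← hR, det_nonsing_inv,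
      Ring.inverse_eq_inv']
  have hR_unit : IsUnit R := by
    rw [isUnit_iff_isUnit_det, isUnit_iff_ne_zero]
    intro h
    simp only [h, mul_zero, zero_eq_inv] at hdet
    exact hP.det_pos.ne hdet
  have key := (hR_unit.posDef_star_right_conjugate_iff.mpr hQ).card_add_log_det_le_trace
  rwa [det_mul, det_mul, mul_right_comm, star_eq_conjTranspose, det_conjTranspose, mul_comm R.det,
    ← star_eq_conjTranspose, hdet, log_mul (inv_ne_zero hP.det_pos.ne') hQ.det_pos.ne', log_inv,
    trace_mul_cycle, ← hR, ← sub_eq_neg_add, add_sub_assoc'] at key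

end LogDet

section Blocks

variable {a b : Type*}

theorem IsSymm.toBlocks₂₁_eq {R : Type*} {M : Matrix (a ⊕ b) (a ⊕ b) R} (hM : M.IsSymm) :
    M.toBlocks₂₁ = M.toBlocks₁₂ᵀ :=
  ((isSymm_fromBlocks_iff.mp ((fromBlocks_toBlocks M).symm ▸ hM)).2.1).symm

theorem IsSymm.exists_eq_fromBlocks {R : Type*} {M : Matrix (a ⊕ b) (a ⊕ b) R}
    (hM : M.IsSymm) :
    ∃ (A : Matrix a a R) (B : Matrix a b R) (D : Matrix b b R), M = Matrix.fromBlocks A B Bᵀ D :=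
  ⟨_, _, _, by rw [← hM.toBlocks₂₁_eq, fromBlocks_toBlocks]⟩

theorem PosDef.toBlocks₁₁ {R : Type*} [Ring R] [PartialOrder R] [StarRing R]
    {M : Matrix (a ⊕ b) (a ⊕ b) R} (hM : M.PosDef) : M.toBlocks₁₁.PosDef :=
  hM.submatrix Sum.inl_injective

theorem trace_fromBlocks_zero_mul [Fintype a] [Fintype b] {R : Type*} [Semiring R]
    (Y : Matrix a a R) (X : Matrix (a ⊕ b) (a ⊕ b) R) :
    (fromBlocks Y 0 0 0 * X).trace = (Y * X.toBlocks₁₁).trace := by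
  rw [← fromBlocks_toBlocks X, fromBlocks_multiply]
  simp [trace, Fintype.sum_sum_type]

variable [Fintype a] [DecidableEq a]

noncomputable def blockCompletion {R : Type*} [CommRing R] (M : Matrix (a ⊕ b) (a ⊕ b) R)
    (Qvv : Matrix a a R) : Matrix (a ⊕ b) (a ⊕ b) R :=
  fromBlocks Qvv
    (Qvv * (M.toBlocks₁₁)⁻¹ * M.toBlocks₁₂)
    ((Qvv * (M.toBlocks₁₁)⁻¹ * M.toBlocks₁₂)ᵀ)
    ((M.toBlocks₂₂ - M.toBlocks₂₁ * (M.toBlocks₁₁)⁻¹ * M.toBlocks₁₂)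
      + M.toBlocks₂₁ * (M.toBlocks₁₁)⁻¹ * Qvv * (M.toBlocks₁₁)⁻¹ * M.toBlocks₁₂)

@[simp]
theorem toBlocks₁₁_blockCompletion {R : Type*} [CommRing R] (M : Matrix (a ⊕ b) (a ⊕ b) R)
    (Qvv : Matrix a a R) : (blockCompletion M Qvv).toBlocks₁₁ = Qvv :=
  toBlocks_fromBlocks₁₁ ..

variable [Fintype b]

theorem mul_fromBlocks_mul_blockCompletion {R : Type*} [CommRing R]
    {M : Matrix (a ⊕ b) (a ⊕ b) R} {Qvv : Matrix a a R} (hM : M.IsSymm) (hQvv : Qvv.IsSymm)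
    (hA : IsUnit M.toBlocks₁₁.det) (hQ : IsUnit Qvv.det) :
    M * fromBlocks (M.toBlocks₁₁⁻¹ - Qvv⁻¹) 0 0 0 * blockCompletion M Qvv
      = blockCompletion M Qvv - M := by
  obtain ⟨A, B, D, rfl⟩ := hM.exists_eq_fromBlocks
  simp only [toBlocks_fromBlocks₁₁] at hA ⊢
  have hAt : A⁻¹ᵀ = A⁻¹ := (isSymm_fromBlocks_iff.mp hM).1.inv.eq
  rw [eq_sub_iff_add_eq, blockCompletion]
  simp only [toBlocks_fromBlocks₁₁, toBlocks_fromBlocks₁₂, toBlocks_fromBlocks₂₁,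
    toBlocks_fromBlocks₂₂, fromBlocks_multiply, fromBlocks_add]
  congr 1 <;>
    simp only [Matrix.mul_zero, Matrix.zero_mul, add_zero, Matrix.mul_sub, Matrix.sub_mul,
      Matrix.mul_assoc, mul_nonsing_inv_cancel_left _ _ hA, nonsing_inv_mul _ hQ,
      nonsing_inv_mul_cancel_left _ _ hQ, Matrix.mul_one, transpose_mul, hAt, hQvv.eq] <;>
    abel

variable [DecidableEq b]

open scoped ComplexOrder in
theorem PosDef.fromBlocks₁₁_iff {𝕜 : Type*} [RCLike 𝕜] {A : Matrix a a 𝕜} (B : Matrix a b 𝕜)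
    (D : Matrix b b 𝕜) (hA : A.PosDef) :
    (fromBlocks A B Bᴴ D).PosDef ↔ (D - Bᴴ * A⁻¹ * B).PosDef := by
  let := hA.isUnit.invertible
  have hpsd := PosDef.fromBlocks₁₁ B D hA
  constructor
  · intro h
    rw [(hpsd.mp h.posSemidef).posDef_iff_det_ne_zero]
    have := h.det_pos.ne'
    rw [det_fromBlocks₁₁, invOf_eq_nonsing_inv] at this
    exact right_ne_zero_of_mul this
  · intro h
    rw [(hpsd.mpr h.posSemidef).posDef_iff_det_ne_zero, det_fromBlocks₁₁, invOf_eq_nonsing_inv]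
    exact mul_ne_zero hA.det_pos.ne' h.det_pos.ne'

theorem PosDef.blockCompletion {M : Matrix (a ⊕ b) (a ⊕ b) ℝ} {Qvv : Matrix a a ℝ}
    (hM : M.PosDef) (hQvv : Qvv.PosDef) : (blockCompletion M Qvv).PosDef := by
  have hA := hM.toBlocks₁₁
  have hMs : M.IsSymm := isHermitian_iff_isSymm.mp hM.isHermitian
  obtain ⟨A, B, D, rfl⟩ := hMs.exists_eq_fromBlocks
  simp only [toBlocks_fromBlocks₁₁] at hA
  have hAt : A⁻¹ᵀ = A⁻¹ := (isSymm_fromBlocks_iff.mp hMs).1.inv.eq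
  have hSchur : (D - Bᵀ * A⁻¹ * B).PosDef := (PosDef.fromBlocks₁₁_iff B D hA).mp hM
  simp only [Matrix.blockCompletion, toBlocks_fromBlocks₁₁, toBlocks_fromBlocks₁₂, toBlocks_fromBlocks₂₁,
    toBlocks_fromBlocks₂₂]
  have hQSchur : D - Bᵀ * A⁻¹ * B + Bᵀ * A⁻¹ * Qvv * A⁻¹ * B
      - (Qvv * A⁻¹ * B)ᴴ * Qvv⁻¹ * (Qvv * A⁻¹ * B) = D - Bᵀ * A⁻¹ * B := by
    simp [conjTranspose_eq_transpose_of_trivial, transpose_mul, hAt,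
      (isHermitian_iff_isSymm.mp hQvv.isHermitian).eq, Matrix.mul_assoc,
      nonsing_inv_mul_cancel_left _ _ hQvv.det_pos.ne'.isUnit]
  rw [← conjTranspose_eq_transpose_of_trivial, PosDef.fromBlocks₁₁_iff _ _ hQvv, hQSchur]
  exact hSchur

theorem PosDef.inv_eq_inv_blockCompletion_add {M : Matrix (a ⊕ b) (a ⊕ b) ℝ}
    {Qvv : Matrix a a ℝ} (hM : M.PosDef) (hQvv : Qvv.PosDef) :
    M⁻¹ = (Matrix.blockCompletion M Qvv)⁻¹ + fromBlocks (M.toBlocks₁₁⁻¹ - Qvv⁻¹) 0 0 0 := by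
  have key := mul_fromBlocks_mul_blockCompletion (isHermitian_iff_isSymm.mp hM.isHermitian)
    (isHermitian_iff_isSymm.mp hQvv.isHermitian) hM.toBlocks₁₁.det_pos.ne'.isUnit
    hQvv.det_pos.ne'.isUnit
  set Q := Matrix.blockCompletion M Qvv
  have hMu := hM.det_pos.ne'.isUnit
  have hQu := (hM.blockCompletion hQvv).det_pos.ne'.isUnit
  calc M⁻¹ = Q⁻¹ + M⁻¹ * (Q - M) * Q⁻¹ := by
        rw [Matrix.mul_sub, Matrix.sub_mul, mul_nonsing_inv_cancel_right _ _ hQu,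
          nonsing_inv_mul _ hMu, Matrix.one_mul, add_sub_cancel]
    _ = _ := by
        rw [← key, Matrix.mul_assoc, Matrix.mul_assoc, mul_nonsing_inv _ hQu, Matrix.mul_one,
          nonsing_inv_mul_cancel_left _ _ hMu]

end Blocks

end Matrix

theorem stmt6 {n m : ℕ}
    (M : Matrix (Fin n ⊕ Fin m) (Fin n ⊕ Fin m) ℝ) (hM : M.PosDef)
    (Qvv : Matrix (Fin n) (Fin n) ℝ) (hQvv : Qvv.PosDef)
    (Qstar : Matrix (Fin n ⊕ Fin m) (Fin n ⊕ Fin m) ℝ)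
    (hQstar : Qstar =
      Matrix.fromBlocks Qvv
        (Qvv * (M.toBlocks₁₁)⁻¹ * M.toBlocks₁₂)
        ((Qvv * (M.toBlocks₁₁)⁻¹ * M.toBlocks₁₂)ᵀ)
        ((M.toBlocks₂₂ - M.toBlocks₂₁ * (M.toBlocks₁₁)⁻¹ * M.toBlocks₁₂)
          + M.toBlocks₂₁ * (M.toBlocks₁₁)⁻¹ * Qvv * (M.toBlocks₁₁)⁻¹ * M.toBlocks₁₂)) :
    ∀ Q : Matrix (Fin n ⊕ Fin m) (Fin n ⊕ Fin m) ℝ,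
      Q.PosDef → Q.toBlocks₁₁ = Qvv →
      (M⁻¹ * Qstar).trace - Real.log Qstar.det
        ≤ (M⁻¹ * Q).trace - Real.log Q.det := by
  obtain rfl : Qstar = blockCompletion M Qvv := hQstar
  intro Q hQ hQ₁₁
  have hQstar_pos := hM.blockCompletion hQvv
  have hsplit (X : Matrix (Fin n ⊕ Fin m) (Fin n ⊕ Fin m) ℝ) :
      (M⁻¹ * X).trace = ((blockCompletion M Qvv)⁻¹ * X).trace
        + ((M.toBlocks₁₁⁻¹ - Qvv⁻¹) * X.toBlocks₁₁).trace := by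
    rw [hM.inv_eq_inv_blockCompletion_add hQvv, Matrix.add_mul, trace_add,
      trace_fromBlocks_zero_mul]
  have gibbs := hQstar_pos.card_add_log_det_sub_log_det_le_trace_inv_mul hQ
  rw [hsplit, hsplit, nonsing_inv_mul _ hQstar_pos.det_pos.ne'.isUnit, trace_one, hQ₁₁,
    toBlocks₁₁_blockCompletion]
  linarith
end

section
/- Let M be an ℓ×ℓ real symmetric positive definite matrix partitioned into blocks M_vv (n×n), M_vh, M_hv = M_vhᵀ, M_hh, let Q_vv be an n×n real symmetric positive definite matrix, and let Q* be the completed matrix with blocks Q_vv, Q_vv (M_vv)⁻¹ M_vh, its transpose, and M_{h|v} + M_hv (M_vv)⁻¹ Q_vv (M_vv)⁻¹ M_vh, where M_{h|v} := M_hh − M_hv (M_vv)⁻¹ M_vh. Then KL(Q*, M) = (1/2)[Tr((M_vv)⁻¹ Q_vv) + log det M_vv − log det Q_vv − n]; that is, the minimized ℓ-dimensional KL divergence equals the KL divergence of the visible n×n blocks. -/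
/-!
With the unipotent `U = [[1, M_vv⁻¹ M_vh], [0, 1]]`, the block `LDLᵀ` factorization reads
`M = Uᵀ · diag(M_vv, M_{h|v}) · U`, and the completed matrix is exactly
`Q* = Uᵀ · diag(Q_vv, M_{h|v}) · U`. The matrix KL divergence is invariant under a common
congruence and additive over block-diagonal pairs, so
`KL(Q*, M) = KL(Q_vv, M_vv) + KL(M_{h|v}, M_{h|v}) = KL(Q_vv, M_vv)`.
-/

open Matrix Real

/-- The matrix Kullback–Leibler divergence
`KL(Q, M) := (1/2)[Tr(M⁻¹Q) + log det M − log det Q − ℓ]`,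
where `ℓ` is the size of the matrices. -/
noncomputable def matKL {ι : Type*} [Fintype ι] [DecidableEq ι]
    (Q M : Matrix ι ι ℝ) : ℝ :=
  (1 / 2) * ((M⁻¹ * Q).trace + Real.log M.det - Real.log Q.det - Fintype.card ι)

namespace Matrix

variable {ι κ R : Type*} [Fintype ι] [Fintype κ]

theorem trace_fromBlocks [AddCommMonoid R] (A : Matrix ι ι R) (B : Matrix ι κ R)
    (C : Matrix κ ι R) (D : Matrix κ κ R) :
    (fromBlocks A B C D).trace = A.trace + D.trace := by
  simp [trace, Fintype.sum_sum_type]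

variable [DecidableEq ι] [DecidableEq κ]

theorem fromBlocks_eq_transpose_mul_fromBlocks_zero_mul [CommSemiring R]
    (Q : Matrix ι ι R) (S : Matrix κ κ R) (K : Matrix ι κ R) :
    fromBlocks Q (Q * K) (Kᵀ * Q) (S + Kᵀ * Q * K)
      = (fromBlocks 1 K 0 1)ᵀ * fromBlocks Q 0 0 S * fromBlocks 1 K 0 1 := by
  simp [fromBlocks_transpose, fromBlocks_multiply, add_comm]

theorem fromBlocks_eq_transpose_mul_fromBlocks_schur_mul_of_isSymm [CommRing R]
    {A : Matrix ι ι R} (B : Matrix ι κ R) (D : Matrix κ κ R) (hA : A.IsSymm)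
    (hAu : IsUnit A.det) :
    fromBlocks A B Bᵀ D = (fromBlocks 1 (A⁻¹ * B) 0 1)ᵀ
      * fromBlocks A 0 0 (D - Bᵀ * A⁻¹ * B) * fromBlocks 1 (A⁻¹ * B) 0 1 := by
  have hKt : (A⁻¹ * B)ᵀ * A = Bᵀ := by
    rw [transpose_mul, hA.inv.eq, nonsing_inv_mul_cancel_right _ _ hAu]
  rw [← fromBlocks_eq_transpose_mul_fromBlocks_zero_mul, hKt,
    mul_nonsing_inv_cancel_left _ _ hAu, ← Matrix.mul_assoc, sub_add_cancel]

end Matrix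

section matKL

variable {ι κ : Type*} [Fintype ι] [Fintype κ] [DecidableEq ι] [DecidableEq κ]

theorem matKL_self {M : Matrix ι ι ℝ} (hM : IsUnit M.det) : matKL M M = 0 := by
  simp [matKL, nonsing_inv_mul M hM]

theorem matKL_transpose_mul_mul {P Q M : Matrix ι ι ℝ} (hP : IsUnit P.det)
    (hQ : Q.det ≠ 0) (hM : M.det ≠ 0) :
    matKL (Pᵀ * Q * P) (Pᵀ * M * P) = matKL Q M := by
  have hPt : IsUnit Pᵀ.det := by rwa [det_transpose]
  have htrace : ((Pᵀ * M * P)⁻¹ * (Pᵀ * Q * P)).trace = (M⁻¹ * Q).trace := by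
    rw [Matrix.mul_inv_rev, Matrix.mul_inv_rev]
    calc (P⁻¹ * (M⁻¹ * Pᵀ⁻¹) * (Pᵀ * Q * P)).trace
        = (P⁻¹ * (M⁻¹ * Q * P)).trace := by
          simp only [Matrix.mul_assoc, nonsing_inv_mul_cancel_left _ _ hPt]
      _ = (M⁻¹ * Q).trace := by
          rw [trace_mul_comm, Matrix.mul_assoc, mul_nonsing_inv _ hP, Matrix.mul_one]
  have hP0 : P.det ≠ 0 := hP.ne_zero
  simp only [matKL, htrace, det_mul, det_transpose, Real.log_mul, mul_ne_zero, hP0, hQ, hM,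
    ne_eq, not_false_eq_true]
  ring

theorem matKL_fromBlocks_zero {Q A : Matrix ι ι ℝ} {R B : Matrix κ κ ℝ}
    (hQ : Q.det ≠ 0) (hA : A.det ≠ 0) (hR : R.det ≠ 0) (hB : B.det ≠ 0) :
    matKL (fromBlocks Q 0 0 R) (fromBlocks A 0 0 B) = matKL Q A + matKL R B := by
  have hinv : (fromBlocks A 0 0 B)⁻¹ = fromBlocks A⁻¹ 0 0 B⁻¹ := by
    rw [inv_fromBlocks_zero₂₁_of_isUnit_iff]
    · simp
    · simp only [isUnit_iff_isUnit_det, isUnit_iff_ne_zero, hA, hB, ne_eq, not_false_eq_true]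
  simp only [matKL, hinv, fromBlocks_multiply, trace_fromBlocks, det_fromBlocks_zero₂₁,
    Real.log_mul hQ hR, Real.log_mul hA hB, Fintype.card_sum, Matrix.mul_zero, add_zero, zero_add,
    Nat.cast_add]
  ring

end matKL

theorem stmt7 {n m : ℕ}
    (M : Matrix (Fin n ⊕ Fin m) (Fin n ⊕ Fin m) ℝ) (hM : M.PosDef)
    (Qvv : Matrix (Fin n) (Fin n) ℝ) (hQvv : Qvv.PosDef)
    (Qstar : Matrix (Fin n ⊕ Fin m) (Fin n ⊕ Fin m) ℝ)
    (hQstar : Qstar =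
      Matrix.fromBlocks Qvv
        (Qvv * (M.toBlocks₁₁)⁻¹ * M.toBlocks₁₂)
        ((Qvv * (M.toBlocks₁₁)⁻¹ * M.toBlocks₁₂)ᵀ)
        ((M.toBlocks₂₂ - M.toBlocks₂₁ * (M.toBlocks₁₁)⁻¹ * M.toBlocks₁₂)
          + M.toBlocks₂₁ * (M.toBlocks₁₁)⁻¹ * Qvv * (M.toBlocks₁₁)⁻¹ * M.toBlocks₁₂)) :
    matKL Qstar M
      = (1 / 2) * (((M.toBlocks₁₁)⁻¹ * Qvv).trace
          + Real.log (M.toBlocks₁₁).det - Real.log Qvv.det - n) := by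
  obtain ⟨hAsymm, hBC, -, -⟩ := isSymm_fromBlocks_iff.mp
    (M.fromBlocks_toBlocks ▸ isHermitian_iff_isSymm.mp hM.1)
  rw [← hBC] at hQstar
  set A := M.toBlocks₁₁
  set B := M.toBlocks₁₂
  set S := M.toBlocks₂₂ - Bᵀ * A⁻¹ * B
  have hA : A.PosDef := hM.submatrix Sum.inl_injective
  have hAu : IsUnit A.det := hA.det_pos.ne'.isUnit
  set U : Matrix (Fin n ⊕ Fin m) (Fin n ⊕ Fin m) ℝ := fromBlocks 1 (A⁻¹ * B) 0 1
  have hMfac : M = Uᵀ * fromBlocks A 0 0 S * U := by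
    rw [← fromBlocks_eq_transpose_mul_fromBlocks_schur_mul_of_isSymm _ _ hAsymm hAu, hBC,
      fromBlocks_toBlocks]
  have hQfac : Qstar = Uᵀ * fromBlocks Qvv 0 0 S * U := by
    rw [hQstar, ← fromBlocks_eq_transpose_mul_fromBlocks_zero_mul]
    have hAinv : (A⁻¹)ᵀ = A⁻¹ := hAsymm.inv.eq
    simp only [transpose_mul, (isHermitian_iff_isSymm.mp hQvv.1).eq, hAinv, Matrix.mul_assoc]
  have hdetM : M.det = A.det * S.det := by
    rw [hMfac]
    simp [U, det_fromBlocks_zero₂₁]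
  have hS : S.det ≠ 0 := right_ne_zero_of_mul (hdetM ▸ hM.det_pos.ne')
  calc matKL Qstar M
      = matKL (fromBlocks Qvv 0 0 S) (fromBlocks A 0 0 S) := by
        rw [hQfac, hMfac, matKL_transpose_mul_mul] <;>
          simp [U, det_fromBlocks_zero₂₁, hQvv.det_pos.ne', hA.det_pos.ne', hS]
    _ = matKL Qvv A + matKL S S :=
        matKL_fromBlocks_zero hQvv.det_pos.ne' hA.det_pos.ne' hS hS
    _ = _ := by rw [matKL_self hS.isUnit, add_zero]; simp [matKL]
end

section
/- Let λ > 0 and, for k = 1,…,K, let Q⁽ᵏ⁾ and Q̃⁽ᵏ⁾ be ℓ×ℓ real symmetric positive definite matrices and M, M̃ ℓ×ℓ real symmetric positive definite matrices. Define J(Q⁽¹⁾,…,Q⁽ᴷ⁾, M) := λ·KL(I, M) + Σ_{k=1}^{K} KL(Q⁽ᵏ⁾, M). Suppose (i) each Q̃⁽ᵏ⁾ has the same upper-left visible block as Q⁽ᵏ⁾ and satisfies KL(Q̃⁽ᵏ⁾, M) ≤ KL(Q⁽ᵏ⁾, M) (E-step does not increase each divergence), and (ii) M̃ = (1/(λ+K))·(Σ_{k=1}^{K}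 Q̃⁽ᵏ⁾ + λ·I) (M-step). Then J(Q̃⁽¹⁾,…,Q̃⁽ᴷ⁾, M̃) ≤ J(Q⁽¹⁾,…,Q⁽ᴷ⁾, M); i.e., one full MKMC iteration does not increase the objective. -/
open Matrix Real

/-!
With `A = ∑ₖ Q̃⁽ᵏ⁾ + λ I = (λ + K) M̃`, the objective for fixed `Q̃⁽ᵏ⁾` depends on `M` only through
`Tr (M⁻¹ A)` and `log det M`, and expanding gives the barycentre identity
`J(Q̃, M) = J(Q̃, M̃) + (λ + K) KL(M̃, M)`. The matrix KL divergence is nonnegative (apply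
`log x ≤ x - 1` to the eigenvalues of `B Q Bᴴ`, where `M⁻¹ = Bᴴ B`), so the M-step does not
increase `J`, and the E-step hypothesis handles the rest.
-/

namespace Matrix

variable {ι κ : Type*} [Fintype ι] [Fintype κ]

theorem sum_mul_trace_mul_eq {w : κ → ℝ} {P : κ → Matrix ι ι ℝ} {Mbar : Matrix ι ι ℝ}
    (hMbar : (∑ k, w k) • Mbar = ∑ k, w k • P k) (X : Matrix ι ι ℝ) :
    ∑ k, w k * (X * P k).trace = (∑ k, w k) * (X * Mbar).trace := by
  simpa only [Matrix.mul_sum, Matrix.mul_smul, trace_sum, trace_smul, smul_eq_mul] using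
    (congrArg (fun Y => (X * Y).trace) hMbar).symm

variable [DecidableEq ι]

theorem PosDef.card_le_trace_sub_log_det {S : Matrix ι ι ℝ} (hS : S.PosDef) :
    (Fintype.card ι : ℝ) ≤ S.trace - Real.log S.det := by
  have hev := hS.eigenvalues_pos
  rw [hS.1.trace_eq_sum_eigenvalues, hS.1.det_eq_prod_eigenvalues]
  simp only [RCLike.ofReal_real_eq_id, id]
  rw [Real.log_prod fun i _ => (hev i).ne', ← Finset.sum_sub_distrib, Fintype.card_eq_sum_ones,
    Nat.cast_sum, Nat.cast_one]
  exact Finset.sum_le_sum fun i _ => by linarith [Real.log_le_sub_one_of_pos (hev i)]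

open scoped MatrixOrder in
theorem matKL_nonneg {Q M : Matrix ι ι ℝ} (hQ : Q.PosDef) (hM : M.PosDef) : 0 ≤ matKL Q M := by
  obtain ⟨B, hB⟩ := CStarAlgebra.nonneg_iff_eq_star_mul_self.mp hM.inv.posSemidef.nonneg
  rw [star_eq_conjTranspose] at hB
  have hdetB : (Bᴴ * B).det ≠ 0 := hB ▸ hM.inv.det_pos.ne'
  have hBu : IsUnit B := by
    rw [det_mul] at hdetB
    exact isUnit_iff_isUnit_det _ |>.mpr (right_ne_zero_of_mul hdetB).isUnit
  have hS : (B * Q * Bᴴ).PosDef :=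
    hQ.mul_mul_conjTranspose_same (vecMul_injective_iff_isUnit.mpr hBu)
  have htrace : (B * Q * Bᴴ).trace = (M⁻¹ * Q).trace := by
    rw [trace_mul_comm, ← Matrix.mul_assoc, hB]
  have hlogdet : Real.log (B * Q * Bᴴ).det = Real.log Q.det - Real.log M.det := by
    have hdet : (B * Q * Bᴴ).det = Q.det * M⁻¹.det := by
      simp only [hB, det_mul]; ring
    rw [hdet, det_nonsing_inv, Ring.inverse_eq_inv',
      Real.log_mul hQ.det_pos.ne' (inv_ne_zero hM.det_pos.ne'), Real.log_inv, sub_eq_add_neg]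
  have := hS.card_le_trace_sub_log_det
  rw [matKL]
  linarith

theorem sum_mul_matKL_eq_add {w : κ → ℝ} {P : κ → Matrix ι ι ℝ} {Mbar : Matrix ι ι ℝ}
    (hMbar : (∑ k, w k) • Mbar = ∑ k, w k • P k) (hdet : IsUnit Mbar.det) (M : Matrix ι ι ℝ) :
    ∑ k, w k * matKL (P k) M = ∑ k, w k * matKL (P k) Mbar + (∑ k, w k) * matKL Mbar M := by
  have hM := sum_mul_trace_mul_eq hMbar M⁻¹
  have hMbar := sum_mul_trace_mul_eq hMbar Mbar⁻¹
  rw [nonsing_inv_mul _ hdet, trace_one] at hMbar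
  simp only [matKL, mul_left_comm (w _) (1 / 2 : ℝ), ← Finset.mul_sum, mul_sub, mul_add,
    Finset.sum_sub_distrib, Finset.sum_add_distrib, ← Finset.sum_mul]
  linear_combination (1 / 2 : ℝ) * (hM - hMbar)

theorem sum_mul_matKL_le {w : κ → ℝ} {P : κ → Matrix ι ι ℝ} {Mbar M : Matrix ι ι ℝ}
    (hw : 0 ≤ ∑ k, w k) (hMbar : (∑ k, w k) • Mbar = ∑ k, w k • P k) (hMbar_pos : Mbar.PosDef)
    (hM : M.PosDef) :
    ∑ k, w k * matKL (P k) Mbar ≤ ∑ k, w k * matKL (P k) M := by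
  rw [sum_mul_matKL_eq_add hMbar hMbar_pos.det_pos.ne'.isUnit M]
  exact le_add_of_nonneg_right (mul_nonneg hw (matKL_nonneg hMbar_pos hM))

end Matrix

theorem stmt10_general {n m K : ℕ} (lam : ℝ) (hlam : 0 < lam)
    (Q Qt : Fin K → Matrix (Fin n ⊕ Fin m) (Fin n ⊕ Fin m) ℝ)
    (M Mt : Matrix (Fin n ⊕ Fin m) (Fin n ⊕ Fin m) ℝ)
    (hM : M.PosDef) (hMt : Mt.PosDef)
    (hEstep : ∀ k, matKL (Qt k) M ≤ matKL (Q k) M)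
    (hMstep : Mt = (1 / (lam + K)) •
      (∑ k, Qt k + lam • (1 : Matrix (Fin n ⊕ Fin m) (Fin n ⊕ Fin m) ℝ))) :
    lam * matKL (1 : Matrix (Fin n ⊕ Fin m) (Fin n ⊕ Fin m) ℝ) Mt + ∑ k, matKL (Qt k) Mt
      ≤ lam * matKL (1 : Matrix (Fin n ⊕ Fin m) (Fin n ⊕ Fin m) ℝ) M + ∑ k, matKL (Q k) M := by
  let w : Option (Fin K) → ℝ := fun o => o.elim lam fun _ => 1
  let P : Option (Fin K) → Matrix (Fin n ⊕ Fin m) (Fin n ⊕ Fin m) ℝ := fun o => o.elim 1 Qt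
  have hw : ∑ o, w o = lam + K := by simp [w, Fintype.sum_option]
  have hMbar : (∑ o, w o) • Mt = ∑ o, w o • P o := by
    rw [hw, hMstep, smul_smul, mul_one_div_cancel (by positivity), one_smul, add_comm]
    simp [w, P, Fintype.sum_option]
  have hMstep_le := Matrix.sum_mul_matKL_le (hw ▸ by positivity) hMbar hMt hM
  simp only [w, P, Fintype.sum_option, Option.elim, one_mul] at hMstep_le
  calc _ ≤ lam * matKL 1 M + ∑ k, matKL (Qt k) M := hMstep_le
    _ ≤ _ := by gcongr with k; exact hEstep k

theorem stmt10 {n m K : ℕ} (lam : ℝ) (hlam : 0 < lam)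
    (Q Qt : Fin K → Matrix (Fin n ⊕ Fin m) (Fin n ⊕ Fin m) ℝ)
    (M Mt : Matrix (Fin n ⊕ Fin m) (Fin n ⊕ Fin m) ℝ)
    (hQ : ∀ k, (Q k).PosDef) (hQt : ∀ k, (Qt k).PosDef)
    (hM : M.PosDef) (hMt : Mt.PosDef)
    (hblocks : ∀ k, (Qt k).toBlocks₁₁ = (Q k).toBlocks₁₁)
    (hEstep : ∀ k, matKL (Qt k) M ≤ matKL (Q k) M)
    (hMstep : Mt = (1 / (lam + K)) •
      (∑ k, Qt k + lam • (1 : Matrix (Fin n ⊕ Fin m) (Fin n ⊕ Fin m) ℝ))) :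
    lam * matKL (1 : Matrix (Fin n ⊕ Fin m) (Fin n ⊕ Fin m) ℝ) Mt + ∑ k, matKL (Qt k) Mt
      ≤ lam * matKL (1 : Matrix (Fin n ⊕ Fin m) (Fin n ⊕ Fin m) ℝ) M + ∑ k, matKL (Q k) M :=
  stmt10_general lam hlam Q Qt M Mt hM hMt hEstep hMstep
end
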